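/- arXiv:2105.12125 — 8 statements merged into one kernel-verified Lean document; each statement's English description precedes it below -/
import Mathlib

section
/- In a presentation satisfying C(4), if u is a relation word with factorization u = X_u Y_u Z_u where X_u is the maximal piece prefix of u and Z_u is the maximal piece suffix of u, then the middle word Y_u is not a piece. -/
variable {A : Type*}

/-- One step of rewriting with respect to a relation set `R`. -/
def OneStep (R : Set (List A × List A)) (u v : List A) : Prop :=
  ∃ x y p q, ((p, q) ∈ R ∨ (q, p) ∈ R) ∧ u = x ++ p ++ y ∧ v = x ++ q ++ y

/-- A (two-sided) congruence on the free monoid `A*`. -/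
def IsCong (s : List A → List A → Prop) : Prop :=
  Equivalence s ∧ ∀ u v x y : List A, s u v → s (x ++ u ++ y) (x ++ v ++ y)

/-- The least congruence on `A*` containing `R`; `Cong R u v` means `(u, v) ∈ R#`. -/
def Cong (R : Set (List A × List A)) (u v : List A) : Prop :=
  ∀ s, IsCong s → (∀ p ∈ R, s p.1 p.2) → s u v

/-- The relation words of the presentation `⟨A | R⟩`. -/
def RelWords (R : Set (List A × List A)) : Set (List A) :=
  {w | ∃ v, (w, v) ∈ R ∨ (v, w) ∈ R}

/-- `p` is a piece of the presentation `⟨A | R⟩`. -/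
def IsPiece (R : Set (List A × List A)) (p : List A) : Prop :=
  p = [] ∨
    (∃ u v, u ∈ RelWords R ∧ v ∈ RelWords R ∧ u ≠ v ∧ p <:+: u ∧ p <:+: v) ∨
    (∃ u x x' y y', u ∈ RelWords R ∧ u = x ++ p ++ y ∧ u = x' ++ p ++ y' ∧ x ≠ x')

/-- The presentation satisfies `C(n)`: no relation word is a product of fewer than `n` pieces. -/
def SatisfiesC (R : Set (List A × List A)) (n : ℕ) : Prop :=
  ∀ u ∈ RelWords R, ∀ l : List (List A), (∀ p ∈ l, IsPiece R p) → u = l.flatten →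
    n ≤ l.length

/-- `X` is the maximal piece prefix of `u`. -/
def MaxPiecePrefix (R : Set (List A × List A)) (u X : List A) : Prop :=
  X <+: u ∧ IsPiece R X ∧ ∀ p, p <+: u → IsPiece R p → p.length ≤ X.length

/-- `Z` is the maximal piece suffix of `u`. -/
def MaxPieceSuffix (R : Set (List A × List A)) (u Z : List A) : Prop :=
  Z <:+ u ∧ IsPiece R Z ∧ ∀ p, p <:+ u → IsPiece R p → p.length ≤ Z.length

/-- `u = X ++ Y ++ Z` is the decomposition of the relation word `u` into its maximal
piece prefix `X`, middle word `Y`, and maximal piece suffix `Z`. -/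
def RelDecomp (R : Set (List A × List A)) (u X Y Z : List A) : Prop :=
  u ∈ RelWords R ∧ MaxPiecePrefix R u X ∧ MaxPieceSuffix R u Z ∧ u = X ++ Y ++ Z

/-- `Y` is the middle word of the relation word `u`. -/
def MiddleWord (R : Set (List A × List A)) (u Y : List A) : Prop :=
  ∃ X Z, RelDecomp R u X Y Z

/-- `v` is a complement of the relation word `u`. -/
def ComplRel (R : Set (List A × List A)) (u v : List A) : Prop :=
  Relation.ReflTransGen (fun a b => (a, b) ∈ R ∨ (b, a) ∈ R) u v

/-- `a ++ X ++ Y` is a relation prefix of `w`. -/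
def IsRelPrefix (R : Set (List A × List A)) (w a X Y : List A) : Prop :=
  (∃ u Z, RelDecomp R u X Y Z) ∧ (a ++ X ++ Y) <+: w

/-- in a `C(4)` presentation the middle word of a relation word is not a piece. -/
theorem middle_word_not_piece (R : Set (List A × List A)) (hC : SatisfiesC R 4)
    (u X Y Z : List A) (h : RelDecomp R u X Y Z) : ¬ IsPiece R Y := by
  intro hY
  obtain ⟨hu, ⟨_, hX, _⟩, ⟨_, hZ, _⟩, heq⟩ := h
  have := hC u hu [X, Y, Z] (by
    intro p hp
    simp only [List.mem_cons, List.not_mem_nil, or_false] at hp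
    rcases hp with rfl | rfl | rfl
    · exact hX
    · exact hY
    · exact hZ) (by simpa using heq)
  simp at this
end

section
/- In a presentation satisfying C(4), for every relation word u the sum of the lengths of the maximal piece prefix and maximal piece suffix is strictly less than the length of u, so the middle word Y_u is nonempty. -/
variable {A : Type*}

/-- An infix of a piece is a piece. -/
lemma IsPiece.infix {R : Set (List A × List A)} {p q : List A}
    (hq : IsPiece R q) (h : p <:+: q) : IsPiece R p := by
  rcases hq with hq | ⟨u, v, hu, hv, huv, h1, h2⟩ | ⟨u, x, x', y, y', hu, e1, e2, hxx⟩
  · subst hq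
    left
    simpa using List.eq_nil_of_infix_nil h
  · exact Or.inr (Or.inl ⟨u, v, hu, hv, huv, h.trans h1, h.trans h2⟩)
  · rcases h with ⟨s, t, rfl⟩
    refine Or.inr (Or.inr ⟨u, x ++ s, x' ++ s, t ++ y, t ++ y', hu, by simp [e1],
      by simp [e2], ?_⟩)
    intro hc
    exact hxx (List.append_cancel_right hc)

/-- in a `C(4)` presentation, `|X_u| + |Z_u| < |u|`, so the middle word is
nonempty. -/
theorem maxPiece_prefix_suffix_lt (R : Set (List A × List A)) (hC : SatisfiesC R 4)
    (u X Z : List A) (hu : u ∈ RelWords R)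
    (hX : MaxPiecePrefix R u X) (hZ : MaxPieceSuffix R u Z) :
    X.length + Z.length < u.length := by
  by_contra hle
  push_neg at hle
  obtain ⟨t, rfl⟩ := hX.1
  -- t is a suffix of X ++ t with length ≤ Z.length, so t is a suffix of Z
  have htZ : t <:+ Z := by
    apply List.suffix_of_suffix_length_le (List.suffix_append X t) hZ.1
    have := hZ.1.length_le
    simp at hle ⊢
    omega
  have ht : IsPiece R t := hZ.2.1.infix htZ.isInfix
  have := hC _ hu [X, t] (by
    intro p hp
    simp at hp
    rcases hp with rfl | rfl
    · exact hX.2.1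
    · exact ht) (by simp)
  simp at this
end

section
/- In a presentation satisfying C(4), the only relation word containing the middle word Y_u as a factor is u itself: if v is a relation word and Y_u is a factor of v, then v = u. -/
variable {A : Type*}

/-- the only relation word containing the middle word `Y_u` as a factor is `u`. -/
theorem middle_word_unique_relword (R : Set (List A × List A)) (hC : SatisfiesC R 4)
    (u X Y Z : List A) (h : RelDecomp R u X Y Z)
    (v : List A) (hv : v ∈ RelWords R) (hYv : Y <:+: v) : v = u := by
  by_contra hne
  obtain ⟨hu, ⟨_, hX, _⟩, ⟨_, hZ, _⟩, heq⟩ := h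
  have hYu : Y <:+: u := ⟨X, Z, heq.symm⟩
  have hYp : IsPiece R Y :=
    Or.inr (Or.inl ⟨u, v, hu, hv, fun e => hne e.symm, hYu, hYv⟩)
  have h4 := hC u hu [X, Y, Z] (by
    intro p hp
    simp only [List.mem_cons, List.not_mem_nil, or_false] at hp
    rcases hp with rfl | rfl | rfl
    · exact hX
    · exact hYp
    · exact hZ) (by simpa using heq)
  simp at h4
end

section
/- In a presentation satisfying C(4), if u_i = X_i Y_i Z_i and u_j = X_j Y_j Z_j are relation words with u_i ≠ u_j, and some suffix of Y_i Z_i is a prefix of X_j Y_j, then that common overlap arises only as a suffix of Z_i matching a prefix of X_j; i.e., some suffix of Z_i is a prefix of X_j. -/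
variable {A : Type*}

/-- if a suffix of `Y_i Z_i` is a prefix of `X_j Y_j` (for distinct relation
words `u_i ≠ u_j`), then that overlap is a suffix of `Z_i` and a prefix of `X_j`. -/
theorem suffix_overlap_in_piece_parts (R : Set (List A × List A)) (hC : SatisfiesC R 4)
    (ui Xi Yi Zi uj Xj Yj Zj s : List A)
    (hi : RelDecomp R ui Xi Yi Zi) (hj : RelDecomp R uj Xj Yj Zj) (hne : ui ≠ uj)
    (hsuf : s <:+ Yi ++ Zi) (hpre : s <+: Xj ++ Yj) :
    s <:+ Zi ∧ s <+: Xj := by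
  obtain ⟨hui, _, ⟨hZsuf, hZpiece, hZmax⟩, hieq⟩ := hi
  obtain ⟨huj, ⟨hXpre, hXpiece, hXmax⟩, _, hjeq⟩ := hj
  have hspiece : IsPiece R s := by
    rcases eq_or_ne s [] with rfl | hs
    · exact Or.inl rfl
    · refine Or.inr (Or.inl ⟨ui, uj, hui, huj, hne, ?_, ?_⟩)
      · exact (hsuf.isInfix).trans <| List.IsSuffix.isInfix (⟨Xi, by rw [hieq, List.append_assoc]⟩ : Yi ++ Zi <:+ ui)
      · exact (hpre.isInfix).trans <| List.IsPrefix.isInfix (⟨Zj, hjeq.symm⟩ : Xj ++ Yj <+: uj)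
  have hsui : s <:+ ui := hsuf.trans ⟨Xi, by rw [hieq, List.append_assoc]⟩
  have hsuj : s <+: uj := hpre.trans ⟨Zj, hjeq.symm⟩
  have h1 : s.length ≤ Zi.length := hZmax s hsui hspiece
  have h2 : s.length ≤ Xj.length := hXmax s hsuj hspiece
  have hZi : Zi <:+ Yi ++ Zi := List.suffix_append Yi Zi
  have hXj : Xj <+: Xj ++ Yj := List.prefix_append Xj Yj
  exact ⟨List.suffix_of_suffix_length_le hsuf hZi h1,
    List.prefix_of_prefix_length_le hpre hXj h2⟩
end

section
/- In a presentation satisfying C(4), if two distinct relation words u_i and u_j overlap as factors of a word w (their occurrences in w intersect, with neither contained in the other), then either a nonempty suffix of Z_i overlaps with a prefix of X_j, or a nonempty suffix of Z_j overlaps with a prefix of X_i. -/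
variable {A : Type*}

private lemma overlap_aux (R : Set (List A × List A))
    (ui Xi Yi Zi uj Xj Yj Zj : List A)
    (hi : RelDecomp R ui Xi Yi Zi) (hj : RelDecomp R uj Xj Yj Zj) (hne : ui ≠ uj)
    (p q p' q' : List A) (heq : p ++ ui ++ q = p' ++ uj ++ q')
    (hle : p.length ≤ p'.length)
    (h1 : p'.length < p.length + ui.length)
    (h2 : p.length + ui.length < p'.length + uj.length) :
    ∃ t, t ≠ ([] : List A) ∧ t <:+ Zi ∧ t <+: Xj := by
  have hpp' : p <+: p' := by
    refine List.prefix_of_prefix_length_le (l₃ := p' ++ uj ++ q') ?_ ?_ hle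
    · rw [← heq]; exact (List.prefix_append p (ui ++ q)).trans (by simp)
    · exact (List.prefix_append p' (uj ++ q')).trans (by simp)
  obtain ⟨s, hs⟩ := hpp'
  subst hs
  have heq2 : ui ++ q = s ++ (uj ++ q') := by
    have := heq
    simp only [List.append_assoc] at this
    exact List.append_cancel_left this
  have hslen : s.length < ui.length := by
    have := h1; simp [List.length_append] at this; omega
  have hsui : s <+: ui := by
    refine List.prefix_of_prefix_length_le ?_ (List.prefix_append ui q) hslen.le
    rw [heq2]; exact List.prefix_append s (uj ++ q')
  obtain ⟨o, ho⟩ := hsui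
  have holen : 0 < o.length := by
    have : ui.length = s.length + o.length := by rw [← ho]; simp
    omega
  have heq3 : o ++ q = uj ++ q' := by
    have := heq2
    rw [← ho] at this
    rw [List.append_assoc] at this
    exact List.append_cancel_left this
  have holej : o.length ≤ uj.length := by
    have h3 : ui.length = s.length + o.length := by rw [← ho]; simp
    have := h2; simp [List.length_append] at this; omega
  have houj : o <+: uj := by
    refine List.prefix_of_prefix_length_le ?_ (List.prefix_append uj q') holej
    rw [← heq3]; exact List.prefix_append o q
  have hosuf : o <:+ ui := ⟨s, ho⟩
  have hpiece : IsPiece R o :=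
    Or.inr (Or.inl ⟨ui, uj, hi.1, hj.1, hne, hosuf.isInfix, houj.isInfix⟩)
  refine ⟨o, by simpa using holen.ne', ?_, ?_⟩
  · exact List.suffix_of_suffix_length_le hosuf hi.2.2.1.1
      (hi.2.2.1.2.2 o hosuf hpiece)
  · exact List.prefix_of_prefix_length_le houj hj.2.1.1
      (hj.2.1.2.2 o houj hpiece)

/-- if two distinct relation words overlap in a word `w` (occurrences
intersecting, neither contained in the other), then a nonempty suffix of `Z_i` is a
prefix of `X_j`, or a nonempty suffix of `Z_j` is a prefix of `X_i`. -/
theorem overlapping_relation_words (R : Set (List A × List A)) (hC : SatisfiesC R 4)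
    (ui Xi Yi Zi uj Xj Yj Zj : List A)
    (hi : RelDecomp R ui Xi Yi Zi) (hj : RelDecomp R uj Xj Yj Zj) (hne : ui ≠ uj)
    (w p q p' q' : List A) (hw1 : w = p ++ ui ++ q) (hw2 : w = p' ++ uj ++ q')
    (hint1 : p.length < p'.length + uj.length)
    (hint2 : p'.length < p.length + ui.length)
    (hnc1 : ¬ (p.length ≤ p'.length ∧ p'.length + uj.length ≤ p.length + ui.length))
    (hnc2 : ¬ (p'.length ≤ p.length ∧ p.length + ui.length ≤ p'.length + uj.length)) :
    (∃ t, t ≠ ([] : List A) ∧ t <:+ Zi ∧ t <+: Xj) ∨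
      (∃ t, t ≠ ([] : List A) ∧ t <:+ Zj ∧ t <+: Xi) := by
  have heq : p ++ ui ++ q = p' ++ uj ++ q' := hw1.symm.trans hw2
  rcases le_total p.length p'.length with hle | hle
  · have h2 : p.length + ui.length < p'.length + uj.length := by
      by_contra h; exact hnc1 ⟨hle, le_of_not_gt h⟩
    exact Or.inl (overlap_aux R ui Xi Yi Zi uj Xj Yj Zj hi hj hne p q p' q' heq hle hint2 h2)
  · have h2 : p'.length + uj.length < p.length + ui.length := by
      by_contra h; exact hnc2 ⟨hle, le_of_not_gt h⟩
    exact Or.inr (overlap_aux R uj Xj Yj Zj ui Xi Yi Zi hj hi hne.symm p' q' p q heq.symm hle hint1 h2)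
end

section
/- Let ⟨A | R⟩ be a presentation satisfying C(4) and w ∈ A*. If a relation word u appears as a factor of some word equivalent to w (i.e., of some w' with (w, w') ∈ R#), then w contains as a factor either the middle word Y_u of u or the middle word of some complement of u. -/
variable {A : Type*}

/-!
Along the chain of elementary rewrites from `w'` back to `w` we keep an occurrence
`a ++ X₁ ++ Y ++ Z₁ ++ t` of the middle word `Y` of a complement `u'` of `u`, where `X Y Z` is the
decomposition of `u'`, `X₁` is a suffix of `X` and `Z₁` a prefix of `Z`. Unless `Z₁ = Z`, the word
`t` is a right fence: it begins with `X' ++ Y' ++ Z₁'` for the decomposition `X' Y' Z'` of some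
relation word and a prefix `Z₁'` of `Z'`, recursively; symmetrically for `a`. Under C(4) a
relation word entering a fence from the left covers only a piece of it, so a relation word `p`
that is rewritten either covers `Y` (and then `p = u'`, replaced by a complement), or meets the
occurrence only inside `Z₁` (which is shortened, with `p`'s replacement as the new fence) or
inside `X₁`, or lies in a fence, and fences survive rewriting. The left side is the right side of
the presentation read backwards.
-/

theorem List.exists_of_append_eq_append_of_length_le {a b c d : List A} (h : a ++ b = c ++ d)
    (hl : a.length ≤ c.length) : ∃ m, c = a ++ m ∧ b = m ++ d := by
  obtain ⟨m, rfl⟩ := List.prefix_of_prefix_length_le ⟨b, h⟩ (List.prefix_append c d) hl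
  exact ⟨m, rfl, by simpa using h⟩

section Pieces

variable {R : Set (List A × List A)}

theorem IsPiece.of_infix {p q : List A} (h : IsPiece R p) (hq : q <:+: p) : IsPiece R q := by
  rcases h with rfl | ⟨u, v, hu, hv, huv, hpu, hpv⟩ | ⟨u, x, x', y, y', hu, h₁, h₂, hx⟩
  · exact .inl (List.eq_nil_of_infix_nil hq)
  · exact .inr (.inl ⟨u, v, hu, hv, huv, hq.trans hpu, hq.trans hpv⟩)
  · obtain ⟨s, e, rfl⟩ := hq
    refine .inr (.inr ⟨u, x ++ s, x' ++ s, e ++ y, e ++ y', hu, by simp [h₁], by simp [h₂], ?_⟩)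
    exact fun h => hx (List.append_cancel_right h)

theorem isPiece_of_two_occurrences {p r x₁ y₁ x₂ y₂ m : List A} (hp : p ∈ RelWords R)
    (hr : r ∈ RelWords R) (h₁ : p = x₁ ++ m ++ y₁) (h₂ : r = x₂ ++ m ++ y₂)
    (hne : p ≠ r ∨ x₁.length ≠ x₂.length) : IsPiece R m := by
  by_cases hpr : p = r
  · subst hpr
    refine .inr (.inr ⟨p, x₁, x₂, y₁, y₂, hp, h₁, h₂, ?_⟩)
    rintro rfl
    exact hne.elim (· rfl) (· rfl)
  · exact .inr (.inl ⟨p, r, hp, hr, hpr, ⟨x₁, y₁, h₁.symm⟩, ⟨x₂, y₂, h₂.symm⟩⟩)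

theorem isPiece_of_prefix_of_occurrence {p r o k s : List A} (hp : p ∈ RelWords R)
    (hr : r ∈ RelWords R) (ho : o <+: p) (hr' : r = k ++ o ++ s) (hk : k ≠ []) :
    IsPiece R o := by
  obtain ⟨g, rfl⟩ := ho
  exact isPiece_of_two_occurrences (x₁ := []) (y₁ := g) hp hr (by simp) hr'
    (.inr fun h => hk (List.eq_nil_of_length_eq_zero h.symm))

theorem SatisfiesC.of_le {m n : ℕ} (hC : SatisfiesC R n) (h : m ≤ n) : SatisfiesC R m :=
  fun u hu l hl hul => h.trans (hC u hu l hl hul)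

theorem SatisfiesC.not_isPiece (hC : SatisfiesC R 2) {u : List A} (hu : u ∈ RelWords R) :
    ¬IsPiece R u := fun h => by
  simpa using hC u hu [u] (by simpa using h) (by simp)

theorem SatisfiesC.not_isPiece_append (hC : SatisfiesC R 3) {u m g : List A}
    (hu : u ∈ RelWords R) (h : u = m ++ g) (hm : IsPiece R m) (hg : IsPiece R g) : False := by
  simpa using hC u hu [m, g] (by simp [hm, hg]) (by simpa using h)

theorem RelDecomp.not_isPiece_middle (hC : SatisfiesC R 4) {u X Y Z : List A}
    (hd : RelDecomp R u X Y Z) : ¬IsPiece R Y := fun hY => by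
  obtain ⟨hu, hX, hZ, rfl⟩ := hd
  simpa using hC _ hu [X, Y, Z] (by simp [hX.2.1, hY, hZ.2.1]) (by simp)

theorem RelDecomp.eq_of_eq_append_middle (hC : SatisfiesC R 4) {r X Y Z p α β : List A}
    (hd : RelDecomp R r X Y Z) (hp : p ∈ RelWords R) (h : p = α ++ Y ++ β) : α = X ∧ β = Z := by
  by_cases hal : p = r ∧ α.length = X.length
  · obtain ⟨rfl, hl⟩ := hal
    obtain ⟨rfl, hβ⟩ := List.append_inj (by simpa using h.symm.trans hd.2.2.2) hl
    exact ⟨rfl, by simpa using hβ⟩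
  · exact (hd.not_isPiece_middle hC
      (isPiece_of_two_occurrences hp hd.1 h hd.2.2.2 (not_and_or.1 hal))).elim

end Pieces

section Decomposition

variable {R : Set (List A × List A)}

theorem exists_longest_isPiece (R : Set (List A × List A)) (L : List (List A)) (h : [] ∈ L) :
    ∃ X ∈ L, IsPiece R X ∧ ∀ p ∈ L, IsPiece R p → p.length ≤ X.length := by
  classical
  obtain ⟨X, hX, hmax⟩ := (L.toFinset.filter (IsPiece R)).exists_max_image List.length
    ⟨[], by simp [h, IsPiece]⟩
  simp only [Finset.mem_filter, List.mem_toFinset] at hX hmax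
  exact ⟨X, hX.1, hX.2, fun p hp hpp => hmax p ⟨hp, hpp⟩⟩

theorem exists_maxPiecePrefix (R : Set (List A × List A)) (u : List A) :
    ∃ X, MaxPiecePrefix R u X := by
  obtain ⟨X, hX, hXp, hmax⟩ := exists_longest_isPiece R u.inits (by simp)
  exact ⟨X, (List.mem_inits _ _).1 hX, hXp, fun p hp => hmax p ((List.mem_inits _ _).2 hp)⟩

theorem exists_maxPieceSuffix (R : Set (List A × List A)) (u : List A) :
    ∃ Z, MaxPieceSuffix R u Z := by
  obtain ⟨Z, hZ, hZp, hmax⟩ := exists_longest_isPiece R u.tails (by simp)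
  exact ⟨Z, (List.mem_tails _ _).1 hZ, hZp, fun p hp => hmax p ((List.mem_tails _ _).2 hp)⟩

/-- Under `C(3)` the maximal piece prefix and suffix of a relation word do not overlap. -/
theorem exists_relDecomp (hC : SatisfiesC R 3) {u : List A} (hu : u ∈ RelWords R) :
    ∃ X Y Z, RelDecomp R u X Y Z := by
  obtain ⟨X, hX⟩ := exists_maxPiecePrefix R u
  obtain ⟨Z, hZ⟩ := exists_maxPieceSuffix R u
  obtain ⟨v, rfl⟩ := hX.1
  have hZv : Z <:+ v := by
    refine List.suffix_of_suffix_length_le hZ.1 (List.suffix_append X v) ?_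
    by_contra! hlt
    have hv : IsPiece R v :=
      hZ.2.1.of_infix (List.suffix_of_suffix_length_le (List.suffix_append X v) hZ.1 hlt.le).isInfix
    exact hC.not_isPiece_append hu rfl hX.2.1 hv
  obtain ⟨Y, rfl⟩ := hZv
  exact ⟨X, Y, Z, hu, hX, hZ, by simp⟩

end Decomposition

section Reversal

def reverseRel (R : Set (List A × List A)) : Set (List A × List A) :=
  Prod.map List.reverse List.reverse ⁻¹' R

variable {R : Set (List A × List A)}

@[simp]
theorem mem_reverseRel {p q : List A} : (p, q) ∈ reverseRel R ↔ (p.reverse, q.reverse) ∈ R :=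
  Iff.rfl

@[simp]
theorem reverseRel_reverseRel (R : Set (List A × List A)) : reverseRel (reverseRel R) = R := by
  ext ⟨p, q⟩
  simp

@[simp]
theorem mem_relWords_reverseRel {u : List A} :
    u ∈ RelWords (reverseRel R) ↔ u.reverse ∈ RelWords R := by
  constructor
  · rintro ⟨v, hv⟩
    exact ⟨v.reverse, by simpa using hv⟩
  · rintro ⟨v, hv⟩
    exact ⟨v.reverse, by simpa using hv⟩

theorem IsPiece.reverse {p : List A} (h : IsPiece R p) : IsPiece (reverseRel R) p.reverse := by
  rcases h with rfl | ⟨u, v, hu, hv, huv, hpu, hpv⟩ | ⟨u, x, x', y, y', hu, h₁, h₂, hx⟩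
  · exact .inl rfl
  · refine .inr (.inl ⟨u.reverse, v.reverse, by simpa using hu, by simpa using hv, ?_,
      List.reverse_infix.2 hpu, List.reverse_infix.2 hpv⟩)
    simpa using huv
  · refine .inr (.inr ⟨u.reverse, y.reverse, y'.reverse, x.reverse, x'.reverse, by simpa using hu,
      by simp [h₁], by simp [h₂], ?_⟩)
    intro hy
    rw [List.reverse_inj] at hy
    subst hy
    exact hx (by simpa using h₁.symm.trans h₂)

@[simp]
theorem isPiece_reverseRel {p : List A} : IsPiece (reverseRel R) p ↔ IsPiece R p.reverse :=
  ⟨fun h => by simpa using h.reverse, fun h => by simpa using h.reverse⟩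

theorem SatisfiesC.reverseRel {n : ℕ} (hC : SatisfiesC R n) : SatisfiesC (reverseRel R) n := by
  intro u hu l hl hul
  simpa using hC u.reverse (by simpa using hu) (l.map List.reverse).reverse
    (fun p hp => by simpa using hl p.reverse (by simpa using hp))
    (by simp [hul, List.reverse_flatten])

theorem MaxPiecePrefix.reverse {u X : List A} (h : MaxPiecePrefix R u X) :
    MaxPieceSuffix (reverseRel R) u.reverse X.reverse :=
  ⟨List.reverse_suffix.2 h.1, h.2.1.reverse, fun p hp hpp => by
    simpa using h.2.2 p.reverse (List.reverse_suffix.1 (by rwa [List.reverse_reverse]))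
      (by simpa using hpp)⟩

theorem MaxPieceSuffix.reverse {u Z : List A} (h : MaxPieceSuffix R u Z) :
    MaxPiecePrefix (reverseRel R) u.reverse Z.reverse :=
  ⟨List.reverse_prefix.2 h.1, h.2.1.reverse, fun p hp hpp => by
    simpa using h.2.2 p.reverse (List.reverse_prefix.1 (by rwa [List.reverse_reverse]))
      (by simpa using hpp)⟩

theorem RelDecomp.reverse {u X Y Z : List A} (hd : RelDecomp R u X Y Z) :
    RelDecomp (reverseRel R) u.reverse Z.reverse Y.reverse X.reverse :=
  ⟨by simpa using hd.1, hd.2.2.1.reverse, hd.2.1.reverse, by simp [hd.2.2.2]⟩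

end Reversal

section Fences

variable {R : Set (List A × List A)}

inductive RightFence (R : Set (List A × List A)) : List A → Prop
  | full {r X Y Z t : List A} : RelDecomp R r X Y Z → RightFence R (X ++ Y ++ Z ++ t)
  | cut {r X Y Z Z₁ t : List A} : RelDecomp R r X Y Z → Z₁ <+: Z → RightFence R t →
      RightFence R (X ++ Y ++ Z₁ ++ t)

def RightGuard (R : Set (List A × List A)) (Z Z₁ t : List A) : Prop :=
  Z₁ <+: Z ∧ (Z₁ = Z ∨ RightFence R t)

theorem RightFence.exists_eq {t : List A} (h : RightFence R t) :
    ∃ r X Y Z Z₁ t', RelDecomp R r X Y Z ∧ RightGuard R Z Z₁ t' ∧ t = X ++ Y ++ Z₁ ++ t' := by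
  cases h with
  | full hd => exact ⟨_, _, _, _, _, _, hd, ⟨List.prefix_refl _, .inl rfl⟩, rfl⟩
  | cut hd hZ₁ hB => exact ⟨_, _, _, _, _, _, hd, ⟨hZ₁, .inr hB⟩, rfl⟩

theorem rightFence_append (hC : SatisfiesC R 3) {q : List A} (hq : q ∈ RelWords R) (y : List A) :
    RightFence R (q ++ y) := by
  obtain ⟨X, Y, Z, hd⟩ := exists_relDecomp hC hq
  simpa [hd.2.2.2] using RightFence.full (t := y) hd

theorem RightFence.isPiece_of_eq_append (hC : SatisfiesC R 4) {t p m g : List A}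
    (hB : RightFence R t) (hp : p ∈ RelWords R) (hpe : p = m ++ g) (hm : m ≠ []) (hg : g <+: t) :
    IsPiece R g := by
  obtain ⟨r, X, Y, Z, Z₁, t', hd, ⟨⟨z₂, hz₂⟩, -⟩, rfl⟩ := hB.exists_eq
  rcases le_total g.length (X ++ Y ++ Z₁).length with hle | hle
  · obtain ⟨s, hs⟩ := List.prefix_of_prefix_length_le hg (List.prefix_append _ _) hle
    refine isPiece_of_prefix_of_occurrence hd.1 hp ⟨s ++ z₂, ?_⟩ (s := []) (by simpa using hpe) hm
    rw [hd.2.2.2, ← hz₂, ← List.append_assoc, hs]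
    simp
  · obtain ⟨e, rfl⟩ := List.prefix_of_prefix_length_le (List.prefix_append _ _) hg hle
    have hX := (hd.eq_of_eq_append_middle hC hp (α := m ++ X) (β := Z₁ ++ e) (by simp [hpe])).1
    exact absurd (by simpa using hX) hm

/-- Otherwise `p = o ++ g` would be a product of two pieces, or `o` a piece suffix of `r` longer
than `Z`. -/
theorem RightGuard.length_le_of_overlap (hC : SatisfiesC R 4) {r X Y Z Z₁ t p k o g : List A}
    (hd : RelDecomp R r X Y Z) (hg : RightGuard R Z Z₁ t) (hp : p ∈ RelWords R)
    (hk : k ++ o = X ++ Y ++ Z₁) (hk₀ : k ≠ []) (hpo : p = o ++ g) (hgt : g <+: t) :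
    o.length ≤ Z₁.length := by
  obtain ⟨⟨z₂, rfl⟩, hZ⟩ := hg
  have hr : r = k ++ o ++ z₂ := by rw [hd.2.2.2, hk]; simp
  have ho : IsPiece R o := isPiece_of_prefix_of_occurrence hp hd.1 ⟨g, hpo.symm⟩ hr hk₀
  by_contra! hlt
  rcases hZ with hZ | hB
  · obtain rfl : z₂ = [] := by simpa using hZ
    have := hd.2.2.1.2.2 o ⟨k, by simp [hr]⟩ ho
    simp at this
    omega
  · have hgp : IsPiece R g :=
      hB.isPiece_of_eq_append hC hp hpo (by rintro rfl; simp at hlt) hgt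
    exact (hC.of_le (by norm_num)).not_isPiece_append hp hpo ho hgp

theorem RightGuard.exists_eq_append_of_occurrence (hC : SatisfiesC R 4)
    {r X Y Z Z₁ t l W x p y : List A} (hd : RelDecomp R r X Y Z) (hW : W <:+ X ++ Y)
    (hg : RightGuard R Z Z₁ t) (hp : p ∈ RelWords R) (hv : l ++ W ++ Z₁ ++ t = x ++ p ++ y)
    (hlx : l.length < x.length) (hxt : x.length ≤ (l ++ W ++ Z₁).length) :
    ∃ d, d <+: Z₁ ∧ x = l ++ W ++ d := by
  obtain ⟨c, hc, hpy⟩ := List.exists_of_append_eq_append_of_length_le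
    (b := p ++ y) (d := t) (by simpa using hv.symm) hxt
  obtain ⟨k, rfl, hk⟩ := List.exists_of_append_eq_append_of_length_le
    (a := l) (b := W ++ Z₁) (by simpa using hc) hlx.le
  have hk₀ : k ≠ [] := by rintro rfl; simp at hlx
  obtain ⟨w₀, hw₀⟩ := hW
  obtain ⟨z₂, hz₂⟩ := hg.1
  have hkc : (w₀ ++ k) ++ c = X ++ Y ++ Z₁ := by rw [← hw₀, List.append_assoc, ← hk]; simp
  rcases le_or_gt p.length c.length with hpc | hcp
  · obtain ⟨m, rfl, -⟩ := List.exists_of_append_eq_append_of_length_le hpy hpc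
    have hr : r = (w₀ ++ k) ++ p ++ (m ++ z₂) := by
      rw [hd.2.2.2, ← hz₂, ← List.append_assoc, ← hkc]; simp
    exact ((hC.of_le (by norm_num)).not_isPiece hp
      (isPiece_of_prefix_of_occurrence hp hd.1 (List.prefix_refl p) hr (by simp [hk₀]))).elim
  · obtain ⟨g, rfl, rfl⟩ := List.exists_of_append_eq_append_of_length_le hpy.symm hcp.le
    have hle := hg.length_le_of_overlap hC hd hp hkc (by simp [hk₀]) rfl (List.prefix_append g y)
    obtain ⟨d, rfl, rfl⟩ := List.exists_of_append_eq_append_of_length_le (a := W) hk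
      (by have := congrArg List.length hk; simp at this; omega)
    exact ⟨d, List.prefix_append d c, by simp⟩

end Fences

section Rewriting

variable {R : Set (List A × List A)}

theorem RightFence.rewrite_of_length_le (hC : SatisfiesC R 4) {r X Y Z Z₁ t x p q y : List A}
    (hpq : (p, q) ∈ R ∨ (q, p) ∈ R) (hd : RelDecomp R r X Y Z) (hg : RightGuard R Z Z₁ t)
    (hv : X ++ Y ++ Z₁ ++ t = x ++ p ++ y) (hxt : x.length ≤ (X ++ Y ++ Z₁).length) :
    RightFence R (x ++ q ++ y) := by
  have hC₃ : SatisfiesC R 3 := hC.of_le (by norm_num)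
  obtain rfl | hx := eq_or_ne x []
  · simpa using rightFence_append hC₃ ⟨p, hpq.symm⟩ y
  obtain ⟨d, hdZ₁, rfl⟩ := hg.exists_eq_append_of_occurrence hC hd (List.suffix_refl _) ⟨q, hpq⟩
    (l := []) (by simpa using hv) (by simpa [List.length_pos_iff] using hx) (by simpa using hxt)
  simpa using RightFence.cut hd (hdZ₁.trans hg.1) (rightFence_append hC₃ ⟨p, hpq.symm⟩ y)

theorem RightFence.rewrite (hC : SatisfiesC R 4) {p q t x y : List A}
    (hpq : (p, q) ∈ R ∨ (q, p) ∈ R) (hB : RightFence R t) (ht : t = x ++ p ++ y) :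
    RightFence R (x ++ q ++ y) := by
  induction hB generalizing x y with
  | @full r X Y Z t hd =>
    rcases le_or_gt x.length (X ++ Y ++ Z).length with hxt | hxt
    · exact .rewrite_of_length_le hC hpq hd ⟨List.prefix_refl Z, .inl rfl⟩ ht hxt
    · obtain ⟨x₃, rfl, -⟩ := List.exists_of_append_eq_append_of_length_le
        (b := t) (d := p ++ y) (by simpa using ht) hxt.le
      simpa using RightFence.full (t := x₃ ++ q ++ y) hd
  | @cut r X Y Z Z₁ t hd hZ₁ hB ih =>
    rcases le_or_gt x.length (X ++ Y ++ Z₁).length with hxt | hxt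
    · exact .rewrite_of_length_le hC hpq hd ⟨hZ₁, .inr hB⟩ ht hxt
    · obtain ⟨x₃, rfl, ht'⟩ := List.exists_of_append_eq_append_of_length_le
        (b := t) (d := p ++ y) (by simpa using ht) hxt.le
      simpa using RightFence.cut hd hZ₁ (ih (by simpa using ht'))

theorem RightGuard.rewrite (hC : SatisfiesC R 4) {r X Y Z Z₁ t l x p q y : List A}
    (hpq : (p, q) ∈ R ∨ (q, p) ∈ R) (hd : RelDecomp R r X Y Z) (hg : RightGuard R Z Z₁ t)
    (hv : l ++ Y ++ Z₁ ++ t = x ++ p ++ y) (hlx : l.length < x.length) :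
    ∃ Z₂ t₂, RightGuard R Z Z₂ t₂ ∧ x ++ q ++ y = l ++ Y ++ Z₂ ++ t₂ := by
  rcases le_or_gt x.length (l ++ Y ++ Z₁).length with hxt | hxt
  · obtain ⟨d, hdZ₁, rfl⟩ := hg.exists_eq_append_of_occurrence hC hd (List.suffix_append X Y)
      ⟨q, hpq⟩ hv hlx hxt
    exact ⟨d, q ++ y, ⟨hdZ₁.trans hg.1, .inr (rightFence_append (hC.of_le (by norm_num))
      ⟨p, hpq.symm⟩ y)⟩, by simp⟩
  · obtain ⟨x₃, rfl, ht⟩ := List.exists_of_append_eq_append_of_length_le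
      (b := t) (d := p ++ y) (by simpa using hv) hxt.le
    exact ⟨Z₁, x₃ ++ q ++ y, ⟨hg.1, hg.2.imp id (·.rewrite hC hpq (by simpa using ht))⟩,
      by simp⟩

def LeftGuard (R : Set (List A × List A)) (X X₁ a : List A) : Prop :=
  RightGuard (reverseRel R) X.reverse X₁.reverse a.reverse

theorem LeftGuard.rewrite (hC : SatisfiesC R 4) {r X Y Z X₁ a l x p q y : List A}
    (hpq : (p, q) ∈ R ∨ (q, p) ∈ R) (hd : RelDecomp R r X Y Z) (hg : LeftGuard R X X₁ a)
    (hv : a ++ X₁ ++ Y ++ l = x ++ p ++ y) (hly : l.length < y.length) :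
    ∃ X₂ a₂, LeftGuard R X X₂ a₂ ∧ x ++ q ++ y = a₂ ++ X₂ ++ Y ++ l := by
  obtain ⟨Z₂, t₂, hg₂, he⟩ := RightGuard.rewrite hC.reverseRel (p := p.reverse) (q := q.reverse)
    (by simpa using hpq) hd.reverse hg (l := l.reverse) (x := y.reverse) (y := x.reverse)
    (by simpa using congrArg List.reverse hv) (by simpa using hly)
  exact ⟨Z₂.reverse, t₂.reverse, by simpa [LeftGuard] using hg₂,
    by simpa using congrArg List.reverse he⟩

end Rewriting

section Invariant

variable {R : Set (List A × List A)}

def HasGuardedMiddle (R : Set (List A × List A)) (u v : List A) : Prop :=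
  ∃ u' X Y Z a X₁ Z₁ t, ComplRel R u u' ∧ RelDecomp R u' X Y Z ∧ LeftGuard R X X₁ a ∧
    RightGuard R Z Z₁ t ∧ v = a ++ X₁ ++ Y ++ Z₁ ++ t

theorem hasGuardedMiddle_of_relDecomp {u u' X Y Z : List A} (hc : ComplRel R u u')
    (hd : RelDecomp R u' X Y Z) (x y : List A) : HasGuardedMiddle R u (x ++ u' ++ y) :=
  ⟨u', X, Y, Z, x, X, Z, y, hc, hd, ⟨List.prefix_refl _, .inl rfl⟩,
    ⟨List.prefix_refl _, .inl rfl⟩, by simp [hd.2.2.2]⟩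

theorem HasGuardedMiddle.middleWord_infix {u v : List A} (h : HasGuardedMiddle R u v) :
    ∃ u' Y, ComplRel R u u' ∧ MiddleWord R u' Y ∧ Y <:+: v := by
  obtain ⟨u', X, Y, Z, a, X₁, Z₁, t, hc, hd, -, -, rfl⟩ := h
  exact ⟨u', Y, hc, ⟨X, Z, hd⟩, a ++ X₁, Z₁ ++ t, by simp⟩

theorem HasGuardedMiddle.rewrite (hC : SatisfiesC R 4) {u v v' : List A}
    (h : HasGuardedMiddle R u v) (hs : OneStep R v v') : HasGuardedMiddle R u v' := by
  obtain ⟨x, y, p, q, hpq, rfl, rfl⟩ := hs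
  obtain ⟨u', X, Y, Z, a, X₁, Z₁, t, hc, hd, hL, hR, hv⟩ := h
  rcases lt_or_ge (a ++ X₁).length x.length with hx | hx
  · obtain ⟨Z₂, t₂, hR₂, he⟩ := hR.rewrite hC hpq hd (l := a ++ X₁) (by simpa using hv.symm) hx
    exact ⟨u', X, Y, Z, a, X₁, Z₂, t₂, hc, hd, hL, hR₂, by simpa using he⟩
  rcases lt_or_ge (x ++ p).length (a ++ X₁ ++ Y).length with hy | hy
  · obtain ⟨X₂, a₂, hL₂, he⟩ := hL.rewrite hC hpq hd (l := Z₁ ++ t) (by simpa using hv.symm)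
      (by have := congrArg List.length hv; simp at this hy ⊢; omega)
    exact ⟨u', X, Y, Z, a₂, X₂, Z₁, t, hc, hd, hL₂, hR, by simpa using he⟩
  -- `p` covers `Y`, so it is the relation word `u'` itself.
  obtain ⟨α, hα, hpy⟩ := List.exists_of_append_eq_append_of_length_le
    (b := p ++ y) (d := Y ++ Z₁ ++ t) (by simpa using hv) hx
  obtain ⟨β, hp, -⟩ := List.exists_of_append_eq_append_of_length_le
    (a := α ++ Y) (b := Z₁ ++ t) (by simpa using hpy.symm)
    (by have := congrArg List.length hα; simp at this hy ⊢; omega)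
  obtain ⟨rfl, rfl⟩ := hd.eq_of_eq_append_middle hC ⟨q, hpq⟩ (by simpa using hp)
  have hpu : p = u' := by rw [hp, hd.2.2.2]
  obtain ⟨Xq, Yq, Zq, hdq⟩ := exists_relDecomp (hC.of_le (by norm_num)) ⟨p, hpq.symm⟩
  exact hasGuardedMiddle_of_relDecomp (hc.tail (hpu ▸ hpq)) hdq x y

end Invariant

theorem OneStep.symm {R : Set (List A × List A)} {u v : List A} (h : OneStep R u v) :
    OneStep R v u := by
  obtain ⟨x, y, p, q, hpq, rfl, rfl⟩ := h
  exact ⟨x, y, q, p, hpq.symm, rfl, rfl⟩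

instance {R : Set (List A × List A)} : Std.Symm (OneStep R) :=
  ⟨fun _ _ => OneStep.symm⟩

theorem Cong.reflTransGen_oneStep {R : Set (List A × List A)} {u v : List A} (h : Cong R u v) :
    Relation.ReflTransGen (OneStep R) u v := by
  refine h _ ⟨⟨fun _ => .refl, fun h => ?_, .trans⟩, fun u v x y huv => ?_⟩ fun pq hpq => ?_
  · exact Relation.ReflTransGen.stdSymm.symm _ _ h
  · induction huv with
    | refl => exact .refl
    | tail _ hs ih =>
      obtain ⟨x₁, y₁, p, q, hpq, rfl, rfl⟩ := hs
      exact ih.tail ⟨x ++ x₁, y₁ ++ y, p, q, hpq, by simp, by simp⟩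
  · exact .single ⟨[], [], pq.1, pq.2, .inl hpq, by simp, by simp⟩

theorem middle_word_in_equivalent_general (R : Set (List A × List A)) (hC : SatisfiesC R 4)
    (u Y : List A) (hY : MiddleWord R u Y)
    (w w' : List A) (hww' : Cong R w w') (hfac : u <:+: w') :
    Y <:+: w ∨ ∃ u' Y', ComplRel R u u' ∧ MiddleWord R u' Y' ∧ Y' <:+: w := by
  obtain ⟨X, Z, hd⟩ := hY
  obtain ⟨α, β, rfl⟩ := hfac
  have hsteps : Relation.ReflTransGen (OneStep R) (α ++ u ++ β) w :=
    Relation.ReflTransGen.stdSymm.symm _ _ hww'.reflTransGen_oneStep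
  refine .inr (HasGuardedMiddle.middleWord_infix ?_)
  clear hww'
  induction hsteps with
  | refl => exact hasGuardedMiddle_of_relDecomp .refl hd α β
  | tail _ hs ih => exact ih.rewrite hC hs

/-- if a relation word `u` appears as a factor of some word equivalent to `w`,
then `w` contains `Y_u` or the middle word of some complement of `u` as a factor. -/
theorem middle_word_in_equivalent (R : Set (List A × List A)) (hC : SatisfiesC R 4)
    (u Y : List A) (hu : u ∈ RelWords R) (hY : MiddleWord R u Y)
    (w w' : List A) (hww' : Cong R w w') (hfac : u <:+: w') :
    Y <:+: w ∨ ∃ u' Y', ComplRel R u u' ∧ MiddleWord R u' Y' ∧ Y' <:+: w :=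
  middle_word_in_equivalent_general R hC u Y hY w w' hww' hfac
end

section
/- If a monoid presentation ⟨A | R⟩ satisfies C(4) and a word w ∈ A* has two relation prefixes aXY and a'X'Y' of equal length (where X, Y and X', Y' are the maximal piece prefix and middle word of relation words, and a, a' ∈ A*), then a = a', X = X', and Y = Y'. -/
variable {A : Type*}

lemma pfx_eq_aux {l p q : List A} (hp : p <+: l) (hq : q <+: l)
    (h : p.length = q.length) : p = q :=
  (List.prefix_of_prefix_length_le hp hq h.le).eq_of_length h

lemma sfx_eq_aux {l p q : List A} (hp : p <:+ l) (hq : q <:+ l)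
    (h : p.length = q.length) : p = q :=
  (List.suffix_of_suffix_length_le hp hq h.le).eq_of_length h

lemma reldecomp_unique (R : Set (List A × List A)) {u X Y Z X₁ Y₁ Z₁ : List A}
    (h : RelDecomp R u X Y Z) (h₁ : RelDecomp R u X₁ Y₁ Z₁) :
    X = X₁ ∧ Y = Y₁ ∧ Z = Z₁ := by
  obtain ⟨-, ⟨hXp, hXpc, hXmax⟩, ⟨hZs, hZpc, hZmax⟩, hu⟩ := h
  obtain ⟨-, ⟨hXp₁, hXpc₁, hXmax₁⟩, ⟨hZs₁, hZpc₁, hZmax₁⟩, hu₁⟩ := h₁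
  have hX : X = X₁ := pfx_eq_aux hXp hXp₁
    (le_antisymm (hXmax₁ X hXp hXpc) (hXmax X₁ hXp₁ hXpc₁))
  have hZ : Z = Z₁ := sfx_eq_aux hZs hZs₁
    (le_antisymm (hZmax₁ Z hZs hZpc) (hZmax Z₁ hZs₁ hZpc₁))
  subst hX hZ
  refine ⟨rfl, ?_, rfl⟩
  have := hu ▸ hu₁
  rw [List.append_assoc, List.append_assoc] at this
  exact List.append_cancel_right (List.append_cancel_left this)

lemma relpfx_lt_false (R : Set (List A × List A)) (hC : SatisfiesC R 4)
    {a X Y a' X' Y' : List A}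
    (hd : ∃ u Z, RelDecomp R u X Y Z) (hd' : ∃ u Z, RelDecomp R u X' Y' Z)
    (heq : a ++ X ++ Y = a' ++ X' ++ Y') (hlt : a.length < a'.length) : False := by
  obtain ⟨u, Z, hd⟩ := hd
  obtain ⟨u', Z', hd'⟩ := hd'
  have heq' : a ++ (X ++ Y) = a' ++ (X' ++ Y') := by
    simpa [List.append_assoc] using heq
  have hlens : a.length + (X ++ Y).length = a'.length + (X' ++ Y').length := by
    have := congrArg List.length heq'
    simpa using this
  have hstrict : (X' ++ Y').length < (X ++ Y).length := by omega
  have hsuf : (X' ++ Y') <:+ (X ++ Y) := by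
    refine List.suffix_of_suffix_length_le (l₃ := a ++ (X ++ Y)) ⟨a', heq'.symm⟩
      ⟨a, rfl⟩ hstrict.le
  have hXYu : (X ++ Y) <+: u := ⟨Z, by rw [hd.2.2.2, List.append_assoc]⟩
  have hY'u : Y' <:+: u :=
    ((List.suffix_append X' Y').isInfix.trans hsuf.isInfix).trans hXYu.isInfix
  by_cases huu : u = u'
  · subst huu
    obtain ⟨hX, hY, -⟩ := reldecomp_unique R hd hd'
    rw [hX, hY] at hstrict
    exact lt_irrefl _ hstrict
  · have hY'pc : IsPiece R Y' :=
      Or.inr (Or.inl ⟨u, u', hd.1, hd'.1, huu, hY'u, ⟨X', Z', hd'.2.2.2.symm⟩⟩)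
    have := hC u' hd'.1 [X', Y', Z']
      (by
        intro p hp
        simp only [List.mem_cons, List.not_mem_nil, or_false] at hp
        rcases hp with rfl | rfl | rfl
        · exact hd'.2.1.2.1
        · exact hY'pc
        · exact hd'.2.2.1.2.1)
      (by simp [hd'.2.2.2, List.append_assoc])
    simp at this

/-- two relation prefixes of `w` of the same length coincide (including their
factorizations). -/
theorem relation_prefix_unique (R : Set (List A × List A)) (hC : SatisfiesC R 4)
    (w a X Y a' X' Y' : List A)
    (h : IsRelPrefix R w a X Y) (h' : IsRelPrefix R w a' X' Y')
    (hlen : (a ++ X ++ Y).length = (a' ++ X' ++ Y').length) :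
    a = a' ∧ X = X' ∧ Y = Y' := by
  have heq : a ++ X ++ Y = a' ++ X' ++ Y' :=
    pfx_eq_aux h.2 h'.2 hlen
  rcases lt_trichotomy a.length a'.length with hlt | hl | hlt
  · exact absurd (relpfx_lt_false R hC h.1 h'.1 heq hlt) not_false
  · have heq' : a ++ (X ++ Y) = a' ++ (X' ++ Y') := by
      simpa [List.append_assoc] using heq
    obtain ⟨ha, hXY⟩ := List.append_inj heq' hl
    obtain ⟨u, Z, hd⟩ := h.1
    obtain ⟨u', Z', hd'⟩ := h'.1
    have hXu : X <+: u := hd.2.1.1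
    have hX'u : X' <+: u := (List.prefix_append X' Y').trans
      (hXY ▸ ⟨Z, by rw [hd.2.2.2, List.append_assoc]⟩)
    have hXu' : X <+: u' := (hXY ▸ (List.prefix_append X Y) :
        X <+: X' ++ Y').trans ⟨Z', by rw [hd'.2.2.2, List.append_assoc]⟩
    have hXlen : X.length = X'.length :=
      le_antisymm (hd'.2.1.2.2 X hXu' hd.2.1.2.1) (hd.2.1.2.2 X' hX'u hd'.2.1.2.1)
    have hX : X = X' := pfx_eq_aux hXu hX'u hXlen
    subst hX
    exact ⟨ha, rfl, List.append_cancel_left hXY⟩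
  · have := relpfx_lt_false R hC h'.1 h.1 heq.symm hlt
    exact absurd this not_false
end

section
/- If ⟨A | R⟩ is a presentation of a finite monoid (A*/R# is finite, A nonempty) and the presentation satisfies C(n) for some n ∈ ℕ, then n ≤ 2. -/
variable {A : Type*}

/-- if `A*/R#` is finite (with `A` nonempty) and the presentation satisfies
`C(n)`, then `n ≤ 2` (assuming the fact that `R#`-classes of a `C(3)` presentation are
finite). -/
theorem finite_monoid_cn_le_two {A : Type*} (R : Set (List A × List A))
    (hA : Nonempty A)
    (hfact : SatisfiesC R 3 → ∀ w : List A, {v | Cong R w v}.Finite)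
    (hfin : Finite (Quot (Cong R))) (n : ℕ) (hC : SatisfiesC R n) : n ≤ 2 := by
  by_contra h
  push_neg at h
  have h3 : SatisfiesC R 3 := fun u hu l hl he =>
    le_trans (by omega) (hC u hu l hl he)
  have hequiv : Equivalence (Cong R) := by
    constructor
    · intro x s hs _; exact hs.1.1 x
    · intro x y hxy s hs hR; exact hs.1.2 (hxy s hs hR)
    · intro x y z hxy hyz s hs hR; exact hs.1.3 (hxy s hs hR) (hyz s hs hR)
  haveI := hA
  have hclass := hfact h3
  have huniv : (Set.univ : Set (List A)).Finite := by
    have : (Set.univ : Set (List A)) =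
        ⋃ q : Quot (Cong R), {v | Quot.mk (Cong R) v = q} := by
      ext v; simp
    rw [this]
    apply Set.finite_iUnion
    intro q
    obtain ⟨w, rfl⟩ := Quot.exists_rep q
    apply (hclass w).subset
    intro v hv
    exact hequiv.symm (hequiv.eqvGen_iff.mp (Quot.eq.mp hv))
  haveI := Set.finite_univ_iff.mp huniv
  exact not_finite (List A)
end
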